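/- Let G be a finite group, let r = (r_0, …, r_{m−1}) be an m-tuple of positive integers, and let a ∈ G^m have associated nested subgroups A_0 = ⊥, A_{i+1} = ⟨A_i, a_i⟩. Then the number of m-tuples b ∈ G^m that are orbit-equivalent to a and of type r equals Σ_s ∏_{i=0}^{m−1} λ_{s_i}(A_i, A_{i+1}), where the sum runs over all distinct m-tuples s = (s_0, …, s_{m−1}) of positive integers whose multiset of entries equals that of r. -/

import Mathlib

/-- The nested subgroups associated to an `m`-tuple `a`:
`A 0 = ⊥` and `A (i+1) = ⟨A i, a i⟩`. -/
def nestedSubgroup {G : Type*} [Group G] {m : ℕ} (a : Fin m → G) : ℕ → Subgroup G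
  | 0 => ⊥
  | i + 1 =>
      if h : i < m then nestedSubgroup a i ⊔ Subgroup.closure {a ⟨i, h⟩}
      else nestedSubgroup a i

/-- `A` lies in the orbit of `B` under the natural action of `Aut G` on subgroups. -/
def inAutOrbit {G : Type*} [Group G] (A B : Subgroup G) : Prop :=
  ∃ φ : MulAut G, Subgroup.map φ.toMonoidHom B = A

/-- `λ_i(A, B)`: the number of `x ∈ G` of order `i` with `⟨A, x⟩` in the
`Aut G`-orbit of `B`. -/
noncomputable def lambdaConstOrd {G : Type*} [Group G] (i : ℕ) (A B : Subgroup G) : ℕ :=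
  Nat.card {x : G // orderOf x = i ∧ inAutOrbit (A ⊔ Subgroup.closure {x}) B}

/-- Two `m`-tuples are orbit-equivalent if their nested subgroups are in the same
`Aut G`-orbits. -/
def orbitEquiv {G : Type*} [Group G] {m : ℕ} (a b : Fin m → G) : Prop :=
  ∀ i ≤ m, inAutOrbit (nestedSubgroup a i) (nestedSubgroup b i)

/-- The multiset of orders of the entries of an `m`-tuple. -/
noncomputable def tupleType {G : Type*} [Group G] {m : ℕ} (b : Fin m → G) : Multiset ℕ :=
  Multiset.map (fun i => orderOf (b i)) Finset.univ.val

/-!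
Split off the last entry: `b = snoc b' x` is orbit-equivalent to `a` iff `b'` is
orbit-equivalent to `init a` and `⟨B_m, x⟩ ∈ Orb(A_{m+1})`. Because `B_m ∈ Orb(A_m)`, an
automorphism carrying `A_m` to `B_m` shows that the number of admissible `x` of order
`s_m` is `λ_{s_m}(A_m, A_{m+1})`, independently of `b'`. By induction the tuples with
prescribed order vector `s` number `∏ λ_{s_i}(A_i, A_{i+1})`; a tuple has type `r` iff its
order vector is a rearrangement of `r`, so summing over these gives the theorem.
-/

open Finset

theorem map_univ_val_eq_iff_exists_perm {ι α : Type*} [Fintype ι] (f g : ι → α) :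
    Multiset.map f univ.val = Multiset.map g univ.val ↔ ∃ σ : Equiv.Perm ι, f = g ∘ σ := by
  classical
  constructor
  · intro h
    have hfiber (x : α) : Fintype.card {i // f i = x} = Fintype.card {i // g i = x} := by
      simpa [Multiset.count_map, Fintype.card_subtype, Finset.filter, eq_comm] using
        congrArg (Multiset.count x) h
    let e (x : α) : {i // f i = x} ≃ {i // g i = x} := Fintype.equivOfCardEq (hfiber x)
    exact ⟨Equiv.ofFiberEquiv e, funext fun i => (Equiv.ofFiberEquiv_map e i).symm⟩
  · rintro ⟨σ, rfl⟩
    rw [← Multiset.map_map, Multiset.map_univ_val_equiv]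

theorem Nat.card_subtype_and_mem_eq_sum {α β : Type*} [Finite α]
    (p : α → Prop) (f : α → β) (S : Finset β) :
    Nat.card {x // p x ∧ f x ∈ S} = ∑ s ∈ S, Nat.card {x // p x ∧ f x = s} := by
  classical
  have := Fintype.ofFinite α
  simp only [Nat.card_eq_fintype_card, Fintype.card_subtype]
  rw [card_eq_sum_card_fiberwise (f := f) (t := S) fun x hx => (mem_filter.mp hx).2.2]
  refine sum_congr rfl fun s hs => congrArg card ?_
  rw [filter_filter]
  exact filter_congr fun x _ => by constructor <;> rintro ⟨hp, rfl⟩ <;> simp_all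

section

variable {G : Type*} [Group G]

theorem inAutOrbit_refl (A : Subgroup G) : inAutOrbit A A :=
  ⟨1, Subgroup.map_id A⟩

theorem inAutOrbit_map_left_iff (φ : MulAut G) {A C : Subgroup G} :
    inAutOrbit (A.map φ.toMonoidHom) C ↔ inAutOrbit A C := by
  constructor
  · rintro ⟨ψ, hψ⟩
    refine ⟨φ⁻¹ * ψ, ?_⟩
    change C.map ((φ⁻¹).toMonoidHom.comp ψ.toMonoidHom) = A
    rw [← Subgroup.map_map, hψ, Subgroup.map_map]
    ext x
    simp
  · rintro ⟨ψ, hψ⟩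
    refine ⟨φ * ψ, ?_⟩
    change C.map (φ.toMonoidHom.comp ψ.toMonoidHom) = _
    rw [← Subgroup.map_map, hψ]

theorem lambdaConstOrd_eq_of_inAutOrbit {A B : Subgroup G} (h : inAutOrbit B A) (i : ℕ)
    (C : Subgroup G) : lambdaConstOrd i B C = lambdaConstOrd i A C := by
  obtain ⟨φ, rfl⟩ := h
  refine (Nat.card_congr (Equiv.subtypeEquiv φ.toEquiv fun x => ?_)).symm
  have hmap : (A ⊔ Subgroup.closure {x}).map φ.toMonoidHom =
      A.map φ.toMonoidHom ⊔ Subgroup.closure {φ x} := by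
    rw [Subgroup.map_sup, MonoidHom.map_closure, Set.image_singleton]
    rfl
  change _ ↔ orderOf (φ x) = i ∧ inAutOrbit (A.map φ.toMonoidHom ⊔ Subgroup.closure {φ x}) C
  rw [← hmap, inAutOrbit_map_left_iff, MulEquiv.orderOf_eq]

theorem nestedSubgroup_succ {m : ℕ} (a : Fin m → G) (i : ℕ) (h : i < m) :
    nestedSubgroup a (i + 1) = nestedSubgroup a i ⊔ Subgroup.closure {a ⟨i, h⟩} := by
  rw [nestedSubgroup, dif_pos h]

theorem nestedSubgroup_snoc {m : ℕ} (a : Fin m → G) (x : G) {i : ℕ} (hi : i ≤ m) :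
    nestedSubgroup (Fin.snoc a x : Fin (m + 1) → G) i = nestedSubgroup a i := by
  induction i with
  | zero => rfl
  | succ i ih =>
    rw [nestedSubgroup_succ _ i (by omega), nestedSubgroup_succ a i hi, ih (by omega)]
    exact congrArg (_ ⊔ Subgroup.closure {·}) (Fin.snoc_castSucc (i := ⟨i, hi⟩) ..)

theorem nestedSubgroup_snoc_last {m : ℕ} (a : Fin m → G) (x : G) :
    nestedSubgroup (Fin.snoc a x : Fin (m + 1) → G) (m + 1) =
      nestedSubgroup a m ⊔ Subgroup.closure {x} := by
  rw [nestedSubgroup_succ _ m m.lt_succ_self, nestedSubgroup_snoc a x le_rfl]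
  exact congrArg (_ ⊔ Subgroup.closure {·}) (Fin.snoc_last (α := fun _ => G) ..)

theorem nestedSubgroup_init {m : ℕ} (a : Fin (m + 1) → G) {i : ℕ} (hi : i ≤ m) :
    nestedSubgroup (Fin.init a) i = nestedSubgroup a i := by
  conv_rhs => rw [← Fin.snoc_init_self a]
  rw [nestedSubgroup_snoc _ _ hi]

theorem orbitEquiv_snoc_iff {m : ℕ} (a : Fin (m + 1) → G) (b : Fin m → G) (x : G) :
    orbitEquiv (Fin.snoc b x : Fin (m + 1) → G) a ↔
      orbitEquiv b (Fin.init a) ∧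
        inAutOrbit (nestedSubgroup b m ⊔ Subgroup.closure {x}) (nestedSubgroup a (m + 1)) := by
  have hlast := nestedSubgroup_snoc_last b x
  constructor
  · intro h
    refine ⟨fun i hi => ?_, hlast ▸ h (m + 1) le_rfl⟩
    simpa [nestedSubgroup_snoc b x hi, nestedSubgroup_init a hi] using h i (by omega)
  · rintro ⟨hinit, hlast'⟩ i hi
    obtain hi | rfl : i ≤ m ∨ i = m + 1 := by omega
    · simpa [nestedSubgroup_snoc b x hi, nestedSubgroup_init a hi] using hinit i hi
    · exact hlast ▸ hlast'

/-- The fibre over `b'` is, by definition, the set counted by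
`lambdaConstOrd (s (last m)) (nestedSubgroup b' m) (nestedSubgroup a (m + 1))`. -/
def orbitEquivOrdersSnocEquiv {m : ℕ} (a : Fin (m + 1) → G) (s : Fin (m + 1) → ℕ) :
    {b : Fin (m + 1) → G // orbitEquiv b a ∧ ∀ i, orderOf (b i) = s i} ≃
      Σ b' : {b' : Fin m → G // orbitEquiv b' (Fin.init a) ∧
          ∀ i, orderOf (b' i) = s i.castSucc},
        {x : G // orderOf x = s (Fin.last m) ∧
          inAutOrbit (nestedSubgroup b'.1 m ⊔ Subgroup.closure {x}) (nestedSubgroup a (m + 1))} where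
  toFun b :=
    have hb := (orbitEquiv_snoc_iff a (Fin.init b.1) (b.1 (Fin.last m))).mp
      (by rw [Fin.snoc_init_self]; exact b.2.1)
    ⟨⟨Fin.init b.1, hb.1, fun i => b.2.2 i.castSucc⟩, b.1 (Fin.last m), b.2.2 _, hb.2⟩
  invFun p := ⟨Fin.snoc p.1.1 p.2.1, (orbitEquiv_snoc_iff a _ _).mpr ⟨p.1.2.1, p.2.2.2⟩,
    Fin.lastCases (by simpa using p.2.2.1) fun j => by simpa using p.1.2.2 j⟩
  left_inv b := Subtype.ext (Fin.snoc_init_self b.1)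
  right_inv p := Sigma.subtype_ext (Subtype.ext (by simp)) (by simp)

theorem card_orbitEquiv_of_orderOf_eq [Finite G] {m : ℕ} (a : Fin m → G) (s : Fin m → ℕ) :
    Nat.card {b : Fin m → G // orbitEquiv b a ∧ ∀ i, orderOf (b i) = s i} =
      ∏ i : Fin m, lambdaConstOrd (s i) (nestedSubgroup a i) (nestedSubgroup a (i + 1)) := by
  induction m with
  | zero =>
    have hall (b : Fin 0 → G) : orbitEquiv b a ∧ ∀ i, orderOf (b i) = s i :=
      ⟨fun i hi => by rw [Nat.le_zero.mp hi]; exact inAutOrbit_refl ⊥, fun i => i.elim0⟩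
    rw [Nat.card_congr (Equiv.subtypeUnivEquiv hall)]
    simp
  | succ m ih =>
    classical
    have := Fintype.ofFinite G
    rw [Nat.card_congr (orbitEquivOrdersSnocEquiv a s), Nat.card_sigma]
    refine (sum_congr rfl fun b' _ => lambdaConstOrd_eq_of_inAutOrbit
      (nestedSubgroup_init a le_rfl ▸ b'.2.1 m le_rfl) _ _).trans ?_
    simp_rw [sum_const, card_univ, ← Nat.card_eq_fintype_card,
      ih, smul_eq_mul, Fin.prod_univ_castSucc]
    congr 1
    refine prod_congr rfl fun i _ => ?_
    rw [nestedSubgroup_init a i.is_lt.le, nestedSubgroup_init a i.is_lt]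
    rfl

end

theorem card_orbitEquiv_class_of_type_general {G : Type*} [Group G] [Fintype G] {m : ℕ}
    (r : Fin m → ℕ) (a : Fin m → G) :
    Nat.card {b : Fin m → G // orbitEquiv b a ∧
        tupleType b = Multiset.map r Finset.univ.val} =
      ∑ s ∈ Finset.image (fun σ : Equiv.Perm (Fin m) => r ∘ σ) Finset.univ,
        ∏ i : Fin m,
          lambdaConstOrd (s i) (nestedSubgroup a (i : ℕ)) (nestedSubgroup a ((i : ℕ) + 1)) := by
  have htype (b : Fin m → G) : tupleType b = Multiset.map r univ.val ↔
      (fun i => orderOf (b i)) ∈ image (fun σ : Equiv.Perm (Fin m) => r ∘ σ) univ := by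
    simp only [tupleType, map_univ_val_eq_iff_exists_perm, mem_image, mem_univ, true_and]
    exact exists_congr fun σ => eq_comm
  simp_rw [htype, Nat.card_subtype_and_mem_eq_sum, funext_iff, card_orbitEquiv_of_orderOf_eq]

/-- The number of `m`-tuples orbit-equivalent to `a` and of type `r` equals
`∑_s ∏_{i<m} λ_{s i}(A_i, A_{i+1})`, the sum being over all distinct `m`-tuples `s`
whose multiset of entries equals that of `r` (i.e., over the permuted versions of `r`). -/
theorem card_orbitEquiv_class_of_type {G : Type*} [Group G] [Fintype G] {m : ℕ}
    (r : Fin m → ℕ) (hr : ∀ i, 0 < r i) (a : Fin m → G) :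
    Nat.card {b : Fin m → G // orbitEquiv b a ∧
        tupleType b = Multiset.map r Finset.univ.val} =
      ∑ s ∈ Finset.image (fun σ : Equiv.Perm (Fin m) => r ∘ σ) Finset.univ,
        ∏ i : Fin m,
          lambdaConstOrd (s i) (nestedSubgroup a (i : ℕ)) (nestedSubgroup a ((i : ℕ) + 1)) :=
  card_orbitEquiv_class_of_type_general r a
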